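/- arXiv:1910.08957 — 3 statements merged into one kernel-verified Lean document; each statement's English description precedes it below -/
import Mathlib

section
/- For every real α > 0, every real β, and every real x ≥ 0, the series Σ_{n=0}^∞ (-1)^n · x^(αn+1) / ((αn+1) · Γ(αn+α+β)) is summable (so the generalised complementary exponential integral Ein_{α,β}(x) is well defined by this series). -/
/-!
Log-convexity of `Γ` gives `Γ(t + a) ≥ (t - 1)^a Γ(t)` for `t > 1`, `a > 0`, so
`Γ(t + α) / Γ(t)` tends to infinity and the ratio test shows that `Σ yⁿ / Γ(αn + c)`
converges for every `y`. Since `x^(αn+1) = x · (x^α)ⁿ` and `|(-1)ⁿ / (αn + 1)| ≤ 1`,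
the series in question is dominated by `x` times such a series.
-/

open Real Filter

namespace Real

theorem log_Gamma_add_log_sub_one_le {t a : ℝ} (ht : 1 < t) (ha : 0 < a) :
    log (Gamma t) + a * log (t - 1) ≤ log (Gamma (t + a)) := by
  have ht1 : 0 < t - 1 := by linarith
  have slope := (convexOn_iff_slope_mono_adjacent.mp convexOn_log_Gamma).2 ht1
    (by linarith : (0 : ℝ) < t + a) (by linarith : t - 1 < t) (by linarith : t < t + a)
  have feq : log (Gamma t) = log (Gamma (t - 1)) + log (t - 1) := by
    rw [← log_mul (Gamma_pos_of_pos ht1).ne' ht1.ne', mul_comm, ← Gamma_add_one ht1.ne',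
      sub_add_cancel]
  simp only [Function.comp_apply, sub_sub_cancel, div_one, add_sub_cancel_left] at slope
  rw [le_div_iff₀ ha, feq, add_sub_cancel_left] at slope
  linarith

theorem rpow_sub_one_mul_Gamma_le_Gamma_add {t a : ℝ} (ht : 1 < t) (ha : 0 < a) :
    (t - 1) ^ a * Gamma t ≤ Gamma (t + a) := by
  have ht1 : 0 < t - 1 := by linarith
  have hGt : 0 < Gamma t := Gamma_pos_of_pos (by linarith)
  rw [← log_le_log_iff (by positivity) (Gamma_pos_of_pos (by linarith)),
    log_mul (by positivity) hGt.ne', log_rpow ht1]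
  linarith [log_Gamma_add_log_sub_one_le ht ha]

theorem tendsto_Gamma_add_div_Gamma_atTop {a : ℝ} (ha : 0 < a) :
    Tendsto (fun t => Gamma (t + a) / Gamma t) atTop atTop := by
  have hpow : Tendsto (fun t : ℝ => (t - 1) ^ a) atTop atTop :=
    (tendsto_rpow_atTop ha).comp (tendsto_atTop_add_const_right atTop (-1) tendsto_id)
  refine tendsto_atTop_mono' _ ?_ hpow
  filter_upwards [eventually_gt_atTop 1] with t ht
  rw [le_div_iff₀ (Gamma_pos_of_pos (by linarith))]
  exact rpow_sub_one_mul_Gamma_le_Gamma_add ht ha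

end Real

theorem summable_pow_div_Gamma (y : ℝ) {α : ℝ} (hα : 0 < α) (c : ℝ) :
    Summable fun n : ℕ => y ^ n / Gamma (α * n + c) := by
  have hlin : Tendsto (fun n : ℕ => α * n + c) atTop atTop :=
    tendsto_atTop_add_const_right _ _ (tendsto_natCast_atTop_atTop.const_mul_atTop hα)
  have hratio := (tendsto_Gamma_add_div_Gamma_atTop hα).comp hlin
  refine summable_of_ratio_norm_eventually_le (r := 1 / 2) (by norm_num) ?_
  filter_upwards [hlin.eventually_gt_atTop 0, hratio.eventually_ge_atTop (2 * |y|)]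
    with n hpos hgrowth
  set t := α * n + c
  have hGt : 0 < Gamma t := Gamma_pos_of_pos hpos
  have hGta : 0 < Gamma (t + α) := Gamma_pos_of_pos (by linarith)
  have hshift : α * ↑(n + 1) + c = t + α := by push_cast; ring
  rw [Function.comp_apply, le_div_iff₀ hGt] at hgrowth
  simp only [hshift, norm_div, norm_pow, norm_eq_abs]
  rw [abs_of_pos hGt, abs_of_pos hGta, div_le_iff₀ hGta, pow_succ]
  calc |y| ^ n * |y| = 1 / 2 * (|y| ^ n / Gamma t) * (2 * |y| * Gamma t) := by
        field_simp
    _ ≤ 1 / 2 * (|y| ^ n / Gamma t) * Gamma (t + α) := by gcongr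

/-- For every real `α > 0`, every real `β`, and every real `x ≥ 0`, the series
`Σ_{n=0}^∞ (-1)^n · x^(αn+1) / ((αn+1) · Γ(αn+α+β))` is summable, so the generalised
complementary exponential integral `Ein_{α,β}(x)` is well defined by this series. -/
theorem einSeries_summable (α : ℝ) (hα : 0 < α) (β : ℝ) (x : ℝ) (hx : 0 ≤ x) :
    Summable (fun n : ℕ =>
      (-1 : ℝ) ^ n * x ^ (α * n + 1) / ((α * n + 1) * Real.Gamma (α * n + α + β))) := by
  have hden : ∀ n : ℕ, 1 ≤ α * n + 1 := fun n => by
    simp only [le_add_iff_nonneg_left]; positivity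
  have hterm : ∀ n : ℕ,
      (-1 : ℝ) ^ n * x ^ (α * n + 1) / ((α * n + 1) * Gamma (α * n + α + β)) =
        (-1) ^ n / (α * n + 1) * (x * ((x ^ α) ^ n / Gamma (α * n + (α + β)))) := fun n => by
    rw [rpow_add' hx (by linarith [hden n]), rpow_mul hx, rpow_natCast, rpow_one, ← add_assoc]
    simp only [div_eq_mul_inv, mul_inv]
    ring
  simp only [hterm]
  refine Summable.of_norm_bounded ((summable_pow_div_Gamma (x ^ α) hα (α + β)).mul_left x).norm
    fun n => ?_
  rw [norm_mul]
  refine mul_le_of_le_one_left (norm_nonneg _) ?_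
  rw [norm_div, norm_pow, norm_neg, norm_one, one_pow, norm_eq_abs,
    abs_of_pos (by linarith [hden n])]
  exact div_le_one_of_le₀ (hden n) (by linarith [hden n])
end

section
/- Let α > 0, β, γ be real numbers with γ > 0. For every complex s with Re(s) > −γ/α one has the convergent expansion 1/((αs+γ) · Γ(αs+α+β)) = Σ_{j=0}^∞ (α+β−γ)_j / Γ(αs + 1 + α + β + j), where (a)_j = a(a+1)⋯(a+j−1) is the Pochhammer symbol. -/
open Complex

/-!
For `0 < re a` and `0 < re x` the `j`-th term is `B(a + j, x + 1) / (Γ(a) Γ(x + 1))`. The Beta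
integrands of these terms are `t ^ (a - 1) (1 - t) ^ (x - 1)` times the terms of the geometric
series `(1 - t) ∑ tʲ`, so dominated convergence sums them to `B(a, x) / (Γ(a) Γ(x + 1))`, which is
`1 / (x Γ(x + a))`. Arbitrary `a` is reached by descending from `a + 1` to `a`, using
`(a)_{j+1} = a (a + 1)_j` and `1 / Γ(z) = z / Γ(z + 1)`, which holds for every `z`.
-/

open Set MeasureTheory Interval

namespace Complex

lemma betaIntegrand_add_nat_add_one {t : ℝ} (ht : t ∈ Ioo 0 1) (u v : ℂ) (n : ℕ) :
    (t : ℂ) ^ (u + n - 1) * (1 - (t : ℂ)) ^ (v + 1 - 1)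
      = (t : ℂ) ^ (u - 1) * (1 - (t : ℂ)) ^ (v - 1) * ((1 - t) * t ^ n) := by
  have ht0 : (t : ℂ) ≠ 0 := ofReal_ne_zero.mpr ht.1.ne'
  have ht1 : 1 - (t : ℂ) ≠ 0 := by exact_mod_cast (sub_pos.mpr ht.2).ne'
  rw [add_sub_right_comm, cpow_add _ _ ht0, cpow_natCast, add_sub_cancel_right,
    ← sub_add_cancel v 1, cpow_add _ _ ht1, cpow_one, add_sub_cancel_right]
  ring

lemma hasSum_betaIntegral_add_nat {u v : ℂ} (hu : 0 < u.re) (hv : 0 < v.re) :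
    HasSum (fun n : ℕ => betaIntegral (u + n) (v + 1)) (betaIntegral u v) := by
  set G : ℝ → ℂ := fun t => (t : ℂ) ^ (u - 1) * (1 - (t : ℂ)) ^ (v - 1) with hG
  have hIoo : ∀ᵐ t : ℝ, t ∈ Ι (0 : ℝ) 1 → t ∈ Ioo (0 : ℝ) 1 := by
    filter_upwards [measure_eq_zero_iff_ae_notMem.mp (measure_singleton (1 : ℝ))] with t h1 ht
    rw [uIoc_of_le zero_le_one] at ht
    exact ⟨ht.1, lt_of_le_of_ne ht.2 h1⟩
  have hbound_eq : ∀ t ∈ Ioo (0 : ℝ) 1, ∀ n : ℕ,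
      ‖(t : ℂ) ^ (u + n - 1) * (1 - (t : ℂ)) ^ (v + 1 - 1)‖ = ‖G t‖ * (1 - t) * t ^ n := by
    intro t ht n
    have hreal : (1 - (t : ℂ)) * (t : ℂ) ^ n = ((1 - t) * t ^ n : ℝ) := by push_cast; ring
    rw [betaIntegrand_add_nat_add_one ht, norm_mul, mul_assoc, hreal, norm_real,
      Real.norm_of_nonneg (mul_nonneg (sub_pos.mpr ht.2).le (pow_nonneg ht.1.le n))]
  have htsum : ∀ t ∈ Ioo (0 : ℝ) 1, ∑' n : ℕ, ‖G t‖ * (1 - t) * t ^ n = ‖G t‖ := by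
    intro t ht
    rw [tsum_mul_left, tsum_geometric_of_lt_one ht.1.le ht.2,
      mul_inv_cancel_right₀ (sub_pos.mpr ht.2).ne']
  refine intervalIntegral.hasSum_integral_of_dominated_convergence
    (fun n t => ‖G t‖ * (1 - t) * t ^ n) (fun n => ?_) (fun n => ?_) ?_ ?_ ?_
  · exact (betaIntegral_convergent
      (by rw [add_re, natCast_re]; exact add_pos_of_pos_of_nonneg hu n.cast_nonneg)
      (by rw [add_re, one_re]; linarith)).def'.aestronglyMeasurable
  · filter_upwards [hIoo] with t ht ht'
    exact (hbound_eq t (ht ht') n).le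
  · filter_upwards [hIoo] with t ht ht'
    exact (summable_geometric_of_lt_one (ht ht').1.le (ht ht').2).mul_left _
  · refine (betaIntegral_convergent hu hv).norm.congr_uIoo fun t ht => ?_
    rw [uIoo_of_le zero_le_one] at ht
    exact (htsum t ht).symm
  · filter_upwards [hIoo] with t ht ht'
    have ht := ht ht'
    have hne : 1 - (t : ℂ) ≠ 0 := by exact_mod_cast (sub_pos.mpr ht.2).ne'
    have hgeom := (hasSum_geometric_of_norm_lt_one (ξ := (t : ℂ))
      (by rw [norm_real, Real.norm_of_nonneg ht.1.le]; exact ht.2)).mul_left (G t * (1 - t))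
    rw [mul_inv_cancel_right₀ hne] at hgeom
    simpa only [betaIntegrand_add_nat_add_one ht, hG, mul_assoc] using hgeom

lemma ascPochhammer_eval_div_Gamma_eq_betaIntegral {a x : ℂ} (ha : 0 < a.re) (hx : 0 < x.re)
    (j : ℕ) : (ascPochhammer ℂ j).eval a / Gamma (x + a + 1 + j)
      = betaIntegral (a + j) (x + 1) / (Gamma a * Gamma (x + 1)) := by
  have hx1 : 0 < (x + 1).re := by rw [add_re, one_re]; linarith
  have haj : 0 < (a + j).re := by
    rw [add_re, natCast_re]; exact add_pos_of_pos_of_nonneg ha j.cast_nonneg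
  have ha_ne : ∀ k : ℕ, a ≠ -k := fun k h => by
    have := congrArg re h
    rw [neg_re, natCast_re] at this
    linarith [k.cast_nonneg (α := ℝ)]
  have hre : 0 < (a + j + (x + 1)).re := by rw [add_re]; exact add_pos haj hx1
  rw [show x + a + 1 + j = a + j + (x + 1) by ring, betaIntegral_eq_Gamma_mul_div _ _ haj hx1,
    ← Gamma_add_nat_div_Gamma_eq a ha_ne]
  field_simp [Gamma_ne_zero_of_re_pos ha, Gamma_ne_zero_of_re_pos hx1,
    Gamma_ne_zero_of_re_pos hre]

lemma hasSum_ascPochhammer_eval_div_Gamma_of_re_pos {a x : ℂ} (ha : 0 < a.re) (hx : 0 < x.re) :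
    HasSum (fun j : ℕ => (ascPochhammer ℂ j).eval a / Gamma (x + a + 1 + j))
      (1 / (x * Gamma (x + a))) := by
  have hx0 : x ≠ 0 := fun h => by simp [h] at hx
  rw [funext (ascPochhammer_eval_div_Gamma_eq_betaIntegral ha hx)]
  have hvalue : betaIntegral a x / (Gamma a * Gamma (x + 1)) = 1 / (x * Gamma (x + a)) := by
    rw [betaIntegral_eq_Gamma_mul_div a x ha hx, Gamma_add_one x hx0, add_comm a x]
    field_simp [Gamma_ne_zero_of_re_pos ha, Gamma_ne_zero_of_re_pos hx]
  exact hvalue ▸ (hasSum_betaIntegral_add_nat ha hx).div_const _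

lemma hasSum_ascPochhammer_eval_div_Gamma_of_add_one {a x : ℂ} (hx : x ≠ 0)
    (h : HasSum (fun j : ℕ => (ascPochhammer ℂ j).eval (a + 1) / Gamma (x + (a + 1) + 1 + j))
      (1 / (x * Gamma (x + (a + 1))))) :
    HasSum (fun j : ℕ => (ascPochhammer ℂ j).eval a / Gamma (x + a + 1 + j))
      (1 / (x * Gamma (x + a))) := by
  refine (hasSum_nat_add_iff' 1).mp ?_
  have hshift : ∀ j : ℕ, (ascPochhammer ℂ (j + 1)).eval a / Gamma (x + a + 1 + (j + 1 : ℕ))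
      = a * ((ascPochhammer ℂ j).eval (a + 1) / Gamma (x + (a + 1) + 1 + j)) := by
    intro j
    rw [ascPochhammer_succ_left, Polynomial.eval_mul, Polynomial.eval_X, Polynomial.eval_comp,
      Polynomial.eval_add, Polynomial.eval_X, Polynomial.eval_one, mul_div_assoc,
      show x + a + 1 + ((j + 1 : ℕ) : ℂ) = x + (a + 1) + 1 + j by push_cast; ring]
  have hvalue : 1 / (x * Gamma (x + a)) - 1 / Gamma (x + a + 1)
      = a * (1 / (x * Gamma (x + (a + 1)))) := by
    simp only [one_div, mul_inv, one_div_Gamma_eq_self_mul_one_div_Gamma_add_one (x + a),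
      ← add_assoc]
    field_simp
    ring
  simp only [hshift, Finset.sum_range_one, ascPochhammer_zero, Polynomial.eval_one, Nat.cast_zero,
    add_zero, hvalue]
  exact h.mul_left a

theorem hasSum_ascPochhammer_eval_div_Gamma (a : ℂ) {x : ℂ} (hx : 0 < x.re) :
    HasSum (fun j : ℕ => (ascPochhammer ℂ j).eval a / Gamma (x + a + 1 + j))
      (1 / (x * Gamma (x + a))) := by
  have hx0 : x ≠ 0 := fun h => by simp [h] at hx
  obtain ⟨n, hn⟩ := exists_nat_gt (-a.re)
  induction n generalizing a with
  | zero => exact hasSum_ascPochhammer_eval_div_Gamma_of_re_pos (by simpa using hn) hx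
  | succ n ih =>
    refine hasSum_ascPochhammer_eval_div_Gamma_of_add_one hx0 (ih (a + 1) ?_)
    rw [add_re, one_re]
    push_cast at hn
    linarith

end Complex

theorem inverse_factorial_expansion_general (α β γ : ℝ) (hα : 0 < α)
    (s : ℂ) (hs : -γ / α < s.re) :
    Summable (fun j : ℕ =>
      (ascPochhammer ℂ j).eval ((α : ℂ) + β - γ) / Complex.Gamma ((α : ℂ) * s + 1 + α + β + j))
    ∧ (1 : ℂ) / (((α : ℂ) * s + γ) * Complex.Gamma ((α : ℂ) * s + α + β))
      = ∑' j : ℕ,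
          (ascPochhammer ℂ j).eval ((α : ℂ) + β - γ)
            / Complex.Gamma ((α : ℂ) * s + 1 + α + β + j) := by
  have hx : 0 < ((α : ℂ) * s + γ).re := by
    have := (div_lt_iff₀ hα).mp hs
    simp only [add_re, mul_re, ofReal_re, ofReal_im, zero_mul, sub_zero]
    linarith
  have key := hasSum_ascPochhammer_eval_div_Gamma ((α : ℂ) + β - γ) hx
  have hxa : (α : ℂ) * s + γ + (α + β - γ) = α * s + α + β := by ring
  have harg : ∀ j : ℕ, (α : ℂ) * s + α + β + 1 + j = α * s + 1 + α + β + j := fun j => by ring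
  rw [hxa] at key
  simp only [harg] at key
  exact ⟨key.summable, key.tsum_eq.symm⟩

/-- Let `α > 0`, `β`, `γ` be real numbers with `γ > 0`. For every complex `s` with
`Re(s) > −γ/α` one has the convergent expansion
`1/((αs+γ) · Γ(αs+α+β)) = Σ_{j=0}^∞ (α+β−γ)_j / Γ(αs + 1 + α + β + j)`,
where `(a)_j` is the Pochhammer symbol. -/
theorem inverse_factorial_expansion (α β γ : ℝ) (hα : 0 < α) (hγ : 0 < γ)
    (s : ℂ) (hs : -γ / α < s.re) :
    Summable (fun j : ℕ =>
      (ascPochhammer ℂ j).eval ((α : ℂ) + β - γ) / Complex.Gamma ((α : ℂ) * s + 1 + α + β + j))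
    ∧ (1 : ℂ) / (((α : ℂ) * s + γ) * Complex.Gamma ((α : ℂ) * s + α + β))
      = ∑' j : ℕ,
          (ascPochhammer ℂ j).eval ((α : ℂ) + β - γ)
            / Complex.Gamma ((α : ℂ) * s + 1 + α + β + j) :=
  inverse_factorial_expansion_general α β γ hα s hs
end

section
/- For every real β > 0, Cin_{1,β}(x) / log x tends to 1/Γ(β) as x → +∞; that is, Cin_{1,β}(x) grows logarithmically like (log x)/Γ(β). -/
/-!
Expanding `1 / Γ(2n+2+β)` through the Beta integral
`∫₀¹ u^(2n+1) (1-u)^(β-1) du = (2n+1)! Γ(β) / Γ(2n+2+β)` and summing the cosine series under the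
integral sign gives `Cin_{1,β}(x) = Γ(β)⁻¹ ∫₀¹ (1-u)^(β-1) (1 - cos xu) / u du`.
For `β = 1` the integral is `∫₀ˣ (1 - cos v) / v dv = log x + O(1)`, because `∫₁ˣ cos v / v dv`
stays bounded (integrate by parts). The weight `(1-u)^(β-1)` changes the integral only by `O(1)`,
since `((1-u)^(β-1) - 1) / u` is integrable on `(0, 1]`: it is a difference quotient near `0` and
dominated by `(1-u)^(β-1)` near `1`.
-/

open Real Filter MeasureTheory Set Topology

theorem integral_rpow_mul_one_sub_rpow {a b : ℝ} (ha : 0 < a) (hb : 0 < b) :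
    ∫ u in (0 : ℝ)..1, u ^ (a - 1) * (1 - u) ^ (b - 1) = Gamma a * Gamma b / Gamma (a + b) := by
  have h := ProbabilityTheory.beta_eq_betaIntegralReal a b ha hb
  rw [ProbabilityTheory.beta, Complex.betaIntegral, ← RCLike.re_to_complex,
    ← intervalIntegral.intervalIntegral_re
      (Complex.betaIntegral_convergent (by simpa) (by simpa))] at h
  rw [h]
  refine intervalIntegral.integral_congr fun u hu => ?_
  rw [uIcc_of_le zero_le_one] at hu
  have hu' : (u : ℂ) ^ ((a : ℂ) - 1) = ((u ^ (a - 1) : ℝ) : ℂ) := by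
    rw [Complex.ofReal_cpow hu.1]; push_cast; rfl
  have hu'' : (1 - (u : ℂ)) ^ ((b : ℂ) - 1) = (((1 - u) ^ (b - 1) : ℝ) : ℂ) := by
    rw [Complex.ofReal_cpow (by linarith [hu.2])]; push_cast; rfl
  simp only [hu', hu'', RCLike.re_to_complex, ← Complex.ofReal_mul, Complex.ofReal_re]

theorem integral_pow_mul_one_sub_rpow (k : ℕ) {b : ℝ} (hb : 0 < b) :
    ∫ u in (0 : ℝ)..1, u ^ k * (1 - u) ^ (b - 1) = k.factorial * Gamma b / Gamma (k + 1 + b) := by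
  have h := integral_rpow_mul_one_sub_rpow (a := k + 1) (by positivity) hb
  simpa [Real.rpow_natCast, Gamma_nat_eq_factorial] using h

theorem intervalIntegrable_one_sub_rpow {b : ℝ} (hb : 0 < b) :
    IntervalIntegrable (fun u : ℝ => (1 - u) ^ (b - 1)) volume 0 1 := by
  simpa using ((intervalIntegral.intervalIntegrable_rpow' (a := 0) (b := 1)
    (by linarith : -1 < b - 1)).comp_sub_left 1).symm

theorem intervalIntegrable_one_sub_rpow_sub_one_div {b : ℝ} (hb : 0 < b) :
    IntervalIntegrable (fun u : ℝ => ((1 - u) ^ (b - 1) - 1) / u) volume 0 1 := by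
  set f : ℝ → ℝ := fun u => (1 - u) ^ (b - 1)
  refine IntervalIntegrable.trans (b := 1 / 2) ?_ ?_
  · have hf : DifferentiableOn ℝ f (Iio 1) := fun u hu =>
      ((differentiableAt_id.const_sub 1).rpow_const
        (Or.inl (sub_pos.2 hu).ne')).differentiableWithinAt
    have hslope : ContinuousOn (dslope f 0) (uIcc 0 (1 / 2)) :=
      ((continuousOn_dslope (Iio_mem_nhds one_pos)).2
        ⟨hf.continuousOn, hf.differentiableAt (Iio_mem_nhds one_pos)⟩).mono
        fun u hu => by rw [uIcc_of_le (by norm_num)] at hu; simp only [mem_Iio]; linarith [hu.2]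
    refine hslope.intervalIntegrable.congr fun u hu => ?_
    rw [uIoc_of_le (by norm_num)] at hu
    simp [dslope_of_ne _ hu.1.ne', slope_def_field, f]
  · have hf : IntervalIntegrable (fun u => f u - 1) volume (1 / 2) 1 :=
      ((intervalIntegrable_one_sub_rpow hb).mono_set (by
        rw [uIcc_of_le (by norm_num), uIcc_of_le zero_le_one]
        exact Icc_subset_Icc (by norm_num) le_rfl)).sub intervalIntegrable_const
    simpa only [div_eq_mul_inv] using hf.mul_continuousOn (continuousOn_inv₀.mono fun u hu => by
      rw [uIcc_of_le (by norm_num)] at hu; exact (show (0 : ℝ) < u by linarith [hu.1]).ne')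

theorem hasSum_one_sub_cos (y : ℝ) :
    HasSum (fun n : ℕ => (-1) ^ n * y ^ (2 * n + 2) / (2 * n + 2).factorial) (1 - cos y) := by
  have h := ((hasSum_nat_add_iff' 1).2 (Real.hasSum_cos y)).neg
  rw [Finset.sum_range_one, neg_sub] at h
  simp only [mul_zero, pow_zero, Nat.factorial_zero, Nat.cast_one, div_one, one_mul] at h
  exact h.congr_fun fun n => by rw [mul_add_one, pow_succ]; ring

theorem continuous_one_sub_cos_mul_div (x : ℝ) : Continuous fun u : ℝ => (1 - cos (x * u)) / u := by
  -- equality also at `u = 0`: there `0 / 0 = 0` and the derivative of `1 - cos (x * u)` vanishes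
  have h : (fun u : ℝ => (1 - cos (x * u)) / u) = dslope (fun u => 1 - cos (x * u)) 0 := by
    ext u
    rcases eq_or_ne u 0 with rfl | hu
    · simp [dslope_same, deriv_comp_mul_left]
    · simp [dslope_of_ne _ hu, slope_def_field]
  rw [h, ← continuousOn_univ, continuousOn_dslope univ_mem]
  exact ⟨by fun_prop, by fun_prop⟩

theorem abs_one_sub_cos_div_le (v : ℝ) : |(1 - cos v) / v| ≤ |v| / 2 := by
  rcases eq_or_ne v 0 with rfl | hv
  · simp
  rw [abs_div, div_le_iff₀ (abs_pos.2 hv), abs_of_nonneg (sub_nonneg.2 (cos_le_one v))]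
  nlinarith [one_sub_sq_div_two_le_cos (x := v), sq_abs v]

theorem abs_integral_cos_div_le {x : ℝ} (hx : 1 ≤ x) : |∫ v in (1 : ℝ)..x, cos v / v| ≤ 3 := by
  have hpos : ∀ v ∈ uIcc 1 x, 0 < v := fun v hv => by
    rw [uIcc_of_le hx] at hv; linarith [hv.1]
  have hinvsq : IntervalIntegrable (fun v : ℝ => (v ^ 2)⁻¹) volume 1 x :=
    ContinuousOn.intervalIntegrable fun v hv => by
      have := hpos v hv; fun_prop (disch := positivity)
  have hparts := intervalIntegral.integral_mul_deriv_eq_deriv_mul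
    (fun v hv => hasDerivAt_inv (hpos v hv).ne') (fun v _ => hasDerivAt_sin v)
    hinvsq.neg (continuous_cos.intervalIntegrable _ _)
  have hremainder : |∫ v in (1 : ℝ)..x, -(v ^ 2)⁻¹ * sin v| ≤ 1 := by
    calc |∫ v in (1 : ℝ)..x, -(v ^ 2)⁻¹ * sin v| ≤ ∫ v in (1 : ℝ)..x, (v ^ 2)⁻¹ := by
          rw [← Real.norm_eq_abs]
          exact intervalIntegral.norm_integral_le_of_norm_le hx (ae_of_all _ fun v _ => by
            rw [norm_mul, norm_neg, norm_inv, norm_pow, Real.norm_eq_abs, sq_abs]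
            exact mul_le_of_le_one_right (by positivity) (abs_sin_le_one v)) hinvsq
      _ = 1 - x⁻¹ := by
          have := integral_zpow (a := 1) (b := x) (n := -2)
            (Or.inr ⟨by norm_num, fun h => (hpos 0 h).false⟩)
          simp only [zpow_neg, zpow_ofNat] at this
          rw [this]; norm_num; ring
      _ ≤ 1 := by linarith [inv_nonneg.2 (zero_le_one.trans hx)]
  have hboundary : |x⁻¹ * sin x| ≤ 1 := by
    rw [abs_mul, abs_inv, abs_of_pos (hpos x right_mem_uIcc)]
    exact mul_le_one₀ (inv_le_one_of_one_le₀ hx) (abs_nonneg _) (abs_sin_le_one x)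
  simp only [div_eq_inv_mul, hparts, inv_one, one_mul]
  have hsin1 := abs_sin_le_one 1
  rw [abs_le] at hremainder hboundary hsin1 ⊢
  constructor <;> linarith

theorem abs_integral_one_sub_cos_div_sub_log_le {x : ℝ} (hx : 1 ≤ x) :
    |(∫ v in (0 : ℝ)..x, (1 - cos v) / v) - log x| ≤ 4 := by
  have hcont : Continuous fun v : ℝ => (1 - cos v) / v := by
    simpa using continuous_one_sub_cos_mul_div 1
  have hpos : ∀ v ∈ uIcc 1 x, v ≠ 0 := fun v hv => by
    rw [uIcc_of_le hx] at hv; linarith [hv.1]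
  have hsplit : ∫ v in (1 : ℝ)..x, (1 - cos v) / v = log x - ∫ v in (1 : ℝ)..x, cos v / v := by
    simp only [sub_div]
    rw [intervalIntegral.integral_sub, integral_one_div (fun h => hpos 0 h rfl), div_one]
    · exact (continuousOn_const.div continuousOn_id hpos).intervalIntegrable
    · exact (continuous_cos.continuousOn.div continuousOn_id hpos).intervalIntegrable
  have hhead : |∫ v in (0 : ℝ)..1, (1 - cos v) / v| ≤ 1 := by
    rw [← Real.norm_eq_abs]
    refine (intervalIntegral.norm_integral_le_of_norm_le_const (C := 1) fun v hv => ?_).trans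
      (by norm_num)
    rw [uIoc_of_le zero_le_one] at hv
    rw [Real.norm_eq_abs]
    linarith [abs_one_sub_cos_div_le v, abs_of_pos hv.1, hv.2]
  have htail := abs_integral_cos_div_le hx
  rw [← intervalIntegral.integral_add_adjacent_intervals (b := 1)
    (hcont.intervalIntegrable _ _) (hcont.intervalIntegrable _ _), hsplit]
  rw [abs_le] at hhead htail ⊢
  constructor <;> linarith

theorem tendsto_div_of_abs_sub_le {α : Type*} {l : Filter α} {f g : α → ℝ} {C : ℝ}
    (hg : Tendsto g l atTop) (hfg : ∀ᶠ a in l, |f a - g a| ≤ C) :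
    Tendsto (fun a => f a / g a) l (𝓝 1) := by
  have hgpos := hg.eventually_gt_atTop 0
  have hrel : Tendsto (fun a => (f a - g a) / g a) l (𝓝 0) := by
    refine squeeze_zero_norm' ?_ ((tendsto_const_nhds (x := C)).div_atTop hg)
    filter_upwards [hfg, hgpos] with a hfga hga
    rw [norm_div, Real.norm_eq_abs, Real.norm_eq_abs, abs_of_pos hga]
    exact div_le_div_of_nonneg_right hfga hga.le
  refine Tendsto.congr' ?_ (by simpa using hrel.const_add 1)
  filter_upwards [hgpos] with a hga
  field_simp
  ring

noncomputable def oneSubCosIntegral (β x : ℝ) : ℝ :=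
  ∫ u in (0 : ℝ)..1, (1 - u) ^ (β - 1) * (1 - cos (x * u)) / u

theorem hasSum_oneSubCosIntegral {β : ℝ} (hβ : 0 < β) (x : ℝ) :
    HasSum (fun n : ℕ => (-1) ^ n * x ^ (2 * n + 2) / (2 * n + 2).factorial *
      ∫ u in (0 : ℝ)..1, u ^ (2 * n + 1) * (1 - u) ^ (β - 1)) (oneSubCosIntegral β x) := by
  simp only [← intervalIntegral.integral_const_mul]
  set c : ℕ → ℝ := fun n => (-1) ^ n * x ^ (2 * n + 2) / (2 * n + 2).factorial
  have hc : Summable fun n => |c n| := (hasSum_one_sub_cos x).summable.abs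
  refine intervalIntegral.hasSum_integral_of_dominated_convergence
    (fun n u => |c n| * (1 - u) ^ (β - 1)) (fun n => Measurable.aestronglyMeasurable (by fun_prop))
    (fun n => ae_of_all _ fun u hu => ?_) (ae_of_all _ fun u _ => hc.mul_right _) ?_
    (ae_of_all _ fun u hu => ?_)
  · rw [uIoc_of_le zero_le_one] at hu
    have hw : 0 ≤ (1 - u) ^ (β - 1) := rpow_nonneg (by linarith [hu.2]) _
    rw [norm_mul, norm_mul, Real.norm_eq_abs, norm_of_nonneg hw,
      norm_of_nonneg (pow_nonneg hu.1.le _)]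
    exact mul_le_mul_of_nonneg_left
      (mul_le_of_le_one_left hw (pow_le_one₀ hu.1.le hu.2)) (abs_nonneg _)
  · simp only [tsum_mul_right]
    exact (intervalIntegrable_one_sub_rpow hβ).const_mul _
  · rw [uIoc_of_le zero_le_one] at hu
    rw [show (1 - u) ^ (β - 1) * (1 - cos (x * u)) / u =
      (1 - cos (x * u)) * ((1 - u) ^ (β - 1) / u) by ring]
    refine ((hasSum_one_sub_cos (x * u)).mul_right _).congr_fun fun n => ?_
    have hu0 : u ≠ 0 := hu.1.ne'
    field_simp
    ring

theorem cin_one_eq {β : ℝ} (hβ : 0 < β) (x : ℝ) :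
    x ^ ((1 : ℝ) + 1) * ∑' n : ℕ, (-1 : ℝ) ^ n * x ^ (2 * (n : ℝ))
        / ((2 * (n : ℝ) + 1 + 1) * Gamma (2 * (n : ℝ) + 2 + β)) =
      oneSubCosIntegral β x / Gamma β := by
  have hterm : ∀ n : ℕ, x ^ ((1 : ℝ) + 1) * ((-1 : ℝ) ^ n * x ^ (2 * (n : ℝ))
        / ((2 * (n : ℝ) + 1 + 1) * Gamma (2 * (n : ℝ) + 2 + β))) =
      (-1) ^ n * x ^ (2 * n + 2) / (2 * n + 2).factorial *
        (∫ u in (0 : ℝ)..1, u ^ (2 * n + 1) * (1 - u) ^ (β - 1)) / Gamma β := by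
    intro n
    have hΓ : 0 < Gamma (2 * n + 2 + β) := Gamma_pos_of_pos (by positivity)
    rw [integral_pow_mul_one_sub_rpow _ hβ, Nat.factorial_succ (2 * n + 1)]
    have h1 : x ^ ((1 : ℝ) + 1) = x ^ 2 := by norm_num
    have h2 : x ^ (2 * (n : ℝ)) = x ^ (2 * n) := by exact_mod_cast rpow_natCast x (2 * n)
    push_cast
    rw [h1, h2, show (2 * n + 1 + 1 + β : ℝ) = 2 * n + 2 + β by ring]
    field_simp [(Gamma_pos_of_pos hβ).ne']
    ring
  rw [← tsum_mul_left, tsum_congr hterm, tsum_div_const,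
    (hasSum_oneSubCosIntegral hβ x).tsum_eq]

theorem oneSubCosIntegral_one (x : ℝ) :
    oneSubCosIntegral 1 x = ∫ v in (0 : ℝ)..x, (1 - cos v) / v := by
  have h := intervalIntegral.mul_integral_comp_mul_left (a := 0) (b := 1)
    (f := fun v => (1 - cos v) / v) (c := x)
  rw [mul_zero, mul_one, ← intervalIntegral.integral_const_mul] at h
  rw [oneSubCosIntegral, ← h]
  refine intervalIntegral.integral_congr fun u _ => ?_
  rcases eq_or_ne x 0 with rfl | hx
  · simp
  · rw [sub_self, rpow_zero, one_mul, mul_div_assoc', mul_div_mul_left _ _ hx]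

theorem abs_oneSubCosIntegral_sub_oneSubCosIntegral_one_le {β : ℝ} (hβ : 0 < β) (x : ℝ) :
    |oneSubCosIntegral β x - oneSubCosIntegral 1 x| ≤
      2 * ∫ u in (0 : ℝ)..1, |((1 - u) ^ (β - 1) - 1) / u| := by
  set h : ℝ → ℝ := fun u => ((1 - u) ^ (β - 1) - 1) / u
  have hh := intervalIntegrable_one_sub_rpow_sub_one_div hβ
  have hdecomp : oneSubCosIntegral β x =
      (∫ u in (0 : ℝ)..1, h u * (1 - cos (x * u))) + oneSubCosIntegral 1 x := by
    simp only [oneSubCosIntegral, sub_self, rpow_zero, one_mul]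
    rw [← intervalIntegral.integral_add (hh.mul_continuousOn (by fun_prop))
      ((continuous_one_sub_cos_mul_div x).intervalIntegrable _ _)]
    exact intervalIntegral.integral_congr fun u _ => by ring
  rw [hdecomp, add_sub_cancel_right, ← intervalIntegral.integral_const_mul, ← Real.norm_eq_abs]
  refine intervalIntegral.norm_integral_le_of_norm_le zero_le_one (ae_of_all _ fun u _ => ?_)
    (hh.abs.const_mul 2)
  have hcos : |1 - cos (x * u)| ≤ 2 := by
    rw [abs_le]; constructor <;> linarith [cos_le_one (x * u), neg_one_le_cos (x * u)]
  rw [norm_mul, Real.norm_eq_abs, Real.norm_eq_abs, mul_comm 2]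
  exact mul_le_mul_of_nonneg_left hcos (abs_nonneg _)

/-- For every real `β > 0`, `Cin_{1,β}(x) / log x` tends to `1/Γ(β)` as `x → +∞`;
that is, `Cin_{1,β}(x)` grows logarithmically like `(log x)/Γ(β)`. -/
theorem cin_one_tendsto (β : ℝ) (hβ : 0 < β) :
    Tendsto (fun x : ℝ =>
        (x ^ ((1 : ℝ) + 1) * ∑' n : ℕ, (-1 : ℝ) ^ n * x ^ (2 * (n : ℝ))
          / ((2 * (n : ℝ) + 1 + 1) * Real.Gamma (2 * (n : ℝ) + 2 + β))) / Real.log x)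
      atTop (nhds (1 / Real.Gamma β)) := by
  have hbound : ∀ᶠ x in atTop, |oneSubCosIntegral β x - log x| ≤
      2 * (∫ u in (0 : ℝ)..1, |((1 - u) ^ (β - 1) - 1) / u|) + 4 := by
    filter_upwards [eventually_ge_atTop 1] with x hx
    have hβ1 := abs_oneSubCosIntegral_sub_oneSubCosIntegral_one_le hβ x
    have h1log := abs_integral_one_sub_cos_div_sub_log_le hx
    rw [← oneSubCosIntegral_one] at h1log
    calc |oneSubCosIntegral β x - log x|
        ≤ |oneSubCosIntegral β x - oneSubCosIntegral 1 x| + |oneSubCosIntegral 1 x - log x| :=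
          abs_sub_le _ _ _
      _ ≤ _ := add_le_add hβ1 h1log
  have hlim := (tendsto_div_of_abs_sub_le tendsto_log_atTop hbound).div_const (Gamma β)
  simp_rw [cin_one_eq hβ, div_right_comm _ (Gamma β)]
  simpa using hlim
end
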